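/- arXiv:2102.08063 — 3 statements merged into one kernel-verified Lean document; each statement's English description precedes it below -/
import Mathlib

section
/- If a measurable nonnegative function π(T,X) satisfies E[π(T,X) u(T) v(X)] = E[u(T)] E[v(X)] for all bounded measurable u and v, then π(T,X) = f_T(T)/f_{T|X}(T|X) almost surely. -/
open MeasureTheory
open scoped ENNReal

/-! Testing the balancing identity against indicators `u = 1_S`, `v = 1_E` shows that the measure
with density `π` with respect to the joint law agrees on rectangles, hence everywhere, with the
product of the two marginal laws. Both measures have Lebesgue densities, `f π` and `f_T f_X`, so
these agree almost everywhere; since `f > 0`, this is `π = f_T f_X / f = f_T / f_{T|X}`. -/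

section Balancing

variable {α β : Type*} [MeasurableSpace α] [MeasurableSpace β] {μ : Measure (α × β)}
  [IsFiniteMeasure μ]

theorem withDensity_ofReal_eq_prod_map_of_integral_mul_eq {g : α × β → ℝ}
    (hg_nonneg : 0 ≤ᵐ[μ] g) (hg : Integrable g μ)
    (hbal : ∀ u : α → ℝ, ∀ v : β → ℝ, Measurable u → Measurable v →
      (∃ Cu : ℝ, ∀ t, |u t| ≤ Cu) → (∃ Cv : ℝ, ∀ x, |v x| ≤ Cv) →
      ∫ p, g p * u p.1 * v p.2 ∂μ = (∫ p, u p.1 ∂μ) * ∫ p, v p.2 ∂μ) :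
    μ.withDensity (fun p => ENNReal.ofReal (g p)) = (μ.map Prod.fst).prod (μ.map Prod.snd) := by
  refine (Measure.prod_eq fun s t hs ht => ?_).symm
  have hst := hbal (s.indicator 1) (t.indicator 1)
    (measurable_one.indicator hs) (measurable_one.indicator ht)
    ⟨1, fun a => by simpa using norm_indicator_le_norm_self (1 : α → ℝ) a⟩
    ⟨1, fun b => by simpa using norm_indicator_le_norm_self (1 : β → ℝ) b⟩
  have hprod : ∫ p, g p * s.indicator 1 p.1 * t.indicator 1 p.2 ∂μ = ∫ p in s ×ˢ t, g p ∂μ := by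
    rw [← integral_indicator (hs.prod ht)]
    congr 1 with p
    by_cases h1 : p.1 ∈ s <;> by_cases h2 : p.2 ∈ t <;> simp [h1, h2]
  rw [hprod, ← integral_map measurable_fst.aemeasurable
      (measurable_one.indicator hs).aestronglyMeasurable, integral_indicator_one hs,
    ← integral_map measurable_snd.aemeasurable
      (measurable_one.indicator ht).aestronglyMeasurable, integral_indicator_one ht] at hst
  rw [withDensity_apply _ (hs.prod ht), ← ofReal_integral_eq_lintegral_ofReal hg.restrict
    (ae_restrict_of_ae hg_nonneg), hst, ENNReal.ofReal_mul measureReal_nonneg,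
    ofReal_measureReal, ofReal_measureReal]

end Balancing

section Marginal

variable {α β : Type*} [MeasurableSpace α] [MeasurableSpace β] {μ : Measure α} {ν : Measure β}
  [SFinite μ] [SFinite ν]

theorem map_fst_withDensity_prod {f : α × β → ℝ≥0∞} (hf : AEMeasurable f (μ.prod ν)) :
    ((μ.prod ν).withDensity f).map Prod.fst = μ.withDensity fun a => ∫⁻ b, f (a, b) ∂ν := by
  ext s hs
  have hrestrict : (μ.prod ν).restrict (s ×ˢ Set.univ) = (μ.restrict s).prod ν :=
    (Measure.restrict_prod_eq_prod_univ s).symm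
  rw [Measure.map_apply measurable_fst hs, withDensity_apply _ (measurable_fst hs),
    withDensity_apply _ hs, ← Set.prod_univ, hrestrict,
    lintegral_prod _ (hrestrict ▸ hf.restrict)]

theorem map_snd_withDensity_prod {f : α × β → ℝ≥0∞} (hf : AEMeasurable f (μ.prod ν)) :
    ((μ.prod ν).withDensity f).map Prod.snd = ν.withDensity fun b => ∫⁻ a, f (a, b) ∂μ := by
  ext t ht
  have hrestrict : (μ.prod ν).restrict (Set.univ ×ˢ t) = μ.prod (ν.restrict t) := by
    rw [← Measure.prod_restrict, Measure.restrict_univ]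
  rw [Measure.map_apply measurable_snd ht, withDensity_apply _ (measurable_snd ht),
    withDensity_apply _ ht, ← Set.univ_prod, hrestrict,
    lintegral_prod_symm _ (hrestrict ▸ hf.restrict)]

theorem map_fst_withDensity_ofReal_prod {f : α × β → ℝ} (hf : Integrable f (μ.prod ν))
    (hf_nonneg : 0 ≤ᵐ[μ.prod ν] f) :
    ((μ.prod ν).withDensity fun p => ENNReal.ofReal (f p)).map Prod.fst =
      μ.withDensity fun a => ENNReal.ofReal (∫ b, f (a, b) ∂ν) := by
  rw [map_fst_withDensity_prod hf.aemeasurable.ennreal_ofReal]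
  refine withDensity_congr_ae ?_
  filter_upwards [hf.prod_right_ae, Measure.ae_ae_of_ae_prod hf_nonneg] with a ha ha_nonneg
  exact (ofReal_integral_eq_lintegral_ofReal ha ha_nonneg).symm

theorem map_snd_withDensity_ofReal_prod {f : α × β → ℝ} (hf : Integrable f (μ.prod ν))
    (hf_nonneg : 0 ≤ᵐ[μ.prod ν] f) :
    ((μ.prod ν).withDensity fun p => ENNReal.ofReal (f p)).map Prod.snd =
      ν.withDensity fun b => ENNReal.ofReal (∫ a, f (a, b) ∂μ) := by
  rw [map_snd_withDensity_prod hf.aemeasurable.ennreal_ofReal]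
  refine withDensity_congr_ae ?_
  have hf_nonneg_swap : ∀ᵐ q ∂ν.prod μ, 0 ≤ f q.swap :=
    Measure.measurePreserving_swap.quasiMeasurePreserving.ae hf_nonneg
  filter_upwards [hf.prod_left_ae, Measure.ae_ae_of_ae_prod hf_nonneg_swap] with b hb hb_nonneg
  exact (ofReal_integral_eq_lintegral_ofReal hb hb_nonneg).symm

end Marginal

section Density

variable {α β : Type*} [MeasurableSpace α] [MeasurableSpace β] {μ : Measure α} {ν : Measure β}
  [SigmaFinite μ] [SigmaFinite ν]

theorem ae_mul_eq_marginal_mul_of_integral_mul_eq {ρ : Measure (α × β)} {f π : α × β → ℝ}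
    (hf_meas : Measurable f) (hf_nonneg : ∀ p, 0 ≤ f p) (hf_int : Integrable f (μ.prod ν))
    (hρ : ρ = (μ.prod ν).withDensity fun p => ENNReal.ofReal (f p))
    (hπ_meas : Measurable π) (hπ_nonneg : ∀ p, 0 ≤ π p) (hπ_int : Integrable π ρ)
    (hbal : ∀ u : α → ℝ, ∀ v : β → ℝ, Measurable u → Measurable v →
      (∃ Cu : ℝ, ∀ t, |u t| ≤ Cu) → (∃ Cv : ℝ, ∀ x, |v x| ≤ Cv) →
      ∫ p, π p * u p.1 * v p.2 ∂ρ = (∫ p, u p.1 ∂ρ) * ∫ p, v p.2 ∂ρ) :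
    ∀ᵐ p ∂μ.prod ν, f p * π p = (∫ b, f (p.1, b) ∂ν) * ∫ a, f (a, p.2) ∂μ := by
  have : IsFiniteMeasure ρ := hρ ▸ isFiniteMeasure_withDensity_ofReal hf_int.2
  have hfT_meas := hf_int.integral_prod_left.aemeasurable
  have hfX_meas := hf_int.integral_prod_right.aemeasurable
  have hdensity : (μ.prod ν).withDensity (fun p => ENNReal.ofReal (f p) * ENNReal.ofReal (π p)) =
      (μ.prod ν).withDensity (fun p => ENNReal.ofReal (∫ b, f (p.1, b) ∂ν) *
        ENNReal.ofReal (∫ a, f (a, p.2) ∂μ)) :=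
    calc _ = ρ.withDensity fun p => ENNReal.ofReal (π p) := by
          rw [hρ, ← withDensity_mul _ hf_meas.ennreal_ofReal hπ_meas.ennreal_ofReal]; rfl
      _ = (ρ.map Prod.fst).prod (ρ.map Prod.snd) :=
          withDensity_ofReal_eq_prod_map_of_integral_mul_eq (ae_of_all _ hπ_nonneg) hπ_int hbal
      _ = (μ.withDensity fun a => ENNReal.ofReal (∫ b, f (a, b) ∂ν)).prod
            (ν.withDensity fun b => ENNReal.ofReal (∫ a, f (a, b) ∂μ)) := by
          rw [hρ, map_fst_withDensity_ofReal_prod hf_int (ae_of_all _ hf_nonneg),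
            map_snd_withDensity_ofReal_prod hf_int (ae_of_all _ hf_nonneg)]
      _ = _ := prod_withDensity₀ hfT_meas.ennreal_ofReal hfX_meas.ennreal_ofReal
  have h_ae := (withDensity_eq_iff_of_sigmaFinite
    (hf_meas.ennreal_ofReal.mul hπ_meas.ennreal_ofReal).aemeasurable
    (hfT_meas.comp_fst.ennreal_ofReal.mul hfX_meas.comp_snd.ennreal_ofReal)).mp hdensity
  filter_upwards [h_ae] with p hp
  have hfT_nonneg : 0 ≤ ∫ b, f (p.1, b) ∂ν := integral_nonneg fun b => hf_nonneg _
  have hfX_nonneg : 0 ≤ ∫ a, f (a, p.2) ∂μ := integral_nonneg fun a => hf_nonneg _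
  simp only [Pi.mul_apply] at hp
  rwa [← ENNReal.ofReal_mul (hf_nonneg p), ← ENNReal.ofReal_mul hfT_nonneg,
    ENNReal.ofReal_eq_ofReal_iff (mul_nonneg (hf_nonneg p) (hπ_nonneg p))
      (mul_nonneg hfT_nonneg hfX_nonneg)] at hp

end Density

/-- If a measurable nonnegative function `π(T,X)` satisfies
`E[π(T,X) u(T) v(X)] = E[u(T)] E[v(X)]` for all bounded measurable `u` and `v`,
then `π(T,X) = f_T(T)/f_{T|X}(T|X)` almost surely (w.r.t. the joint law `μ` of `(T,X)`,
which has joint density `f > 0`, marginals `fT`, `fX`, conditional density `fTX = f/fX`). -/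
theorem stmt2 {r : ℕ} (μ : Measure (ℝ × (Fin r → ℝ))) [IsProbabilityMeasure μ]
    (f : ℝ → (Fin r → ℝ) → ℝ)
    (hfmeas : Measurable fun p : ℝ × (Fin r → ℝ) => f p.1 p.2)
    (hfpos : ∀ t x, 0 < f t x)
    (hdens : μ = (volume : Measure (ℝ × (Fin r → ℝ))).withDensity
      fun p => ENNReal.ofReal (f p.1 p.2))
    (fT : ℝ → ℝ) (hfT : ∀ t, fT t = ∫ x, f t x ∂(volume : Measure (Fin r → ℝ)))
    (fX : (Fin r → ℝ) → ℝ) (hfX : ∀ x, fX x = ∫ t, f t x ∂(volume : Measure ℝ))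
    (fTX : ℝ → (Fin r → ℝ) → ℝ) (hfTX : ∀ t x, fTX t x = f t x / fX x)
    (π : ℝ → (Fin r → ℝ) → ℝ)
    (hπmeas : Measurable fun p : ℝ × (Fin r → ℝ) => π p.1 p.2)
    (hπnonneg : ∀ t x, 0 ≤ π t x)
    (hπint : Integrable (fun p : ℝ × (Fin r → ℝ) => π p.1 p.2) μ)
    (hbal : ∀ u : ℝ → ℝ, ∀ v : (Fin r → ℝ) → ℝ, Measurable u → Measurable v →
      (∃ Cu : ℝ, ∀ t, |u t| ≤ Cu) → (∃ Cv : ℝ, ∀ x, |v x| ≤ Cv) →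
      ∫ p, π p.1 p.2 * u p.1 * v p.2 ∂μ = (∫ p, u p.1 ∂μ) * ∫ p, v p.2 ∂μ) :
    ∀ᵐ p ∂μ, π p.1 p.2 = fT p.1 / fTX p.1 p.2 := by
  obtain rfl : fT = fun t => ∫ x, f t x := funext hfT
  obtain rfl : fX = fun x => ∫ t, f t x := funext hfX
  rw [Measure.volume_eq_prod] at hdens
  have hf_nonneg : ∀ p : ℝ × (Fin r → ℝ), 0 ≤ f p.1 p.2 := fun p => (hfpos _ _).le
  have hf_int : Integrable (fun p : ℝ × (Fin r → ℝ) => f p.1 p.2) (volume.prod volume) := by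
    refine (lintegral_ofReal_ne_top_iff_integrable hfmeas.aestronglyMeasurable
      (ae_of_all _ hf_nonneg)).mp ?_
    rw [← setLIntegral_univ, ← withDensity_apply _ MeasurableSet.univ, ← hdens]
    exact measure_ne_top μ _
  have h_ae := ae_mul_eq_marginal_mul_of_integral_mul_eq hfmeas hf_nonneg hf_int hdens hπmeas
    (fun p => hπnonneg p.1 p.2) hπint hbal
  filter_upwards [hdens ▸ withDensity_absolutelyContinuous _ _ h_ae] with p hp
  rw [hfTX, div_div_eq_mul_div, ← hp, mul_div_cancel_left₀ _ (hfpos _ _).ne']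
end

section
/- For an integrable random variable U and a real random variable T: E[U | T] = 0 almost surely if and only if E[U · 𝟙(T ≤ t)] = 0 for all t ∈ ℝ. -/
/-!
`E[U | T] = 0` a.s. says exactly that `U` integrates to zero over every
`σ(T)`-measurable set. The sets `{T ≤ t}` form a π-system generating `σ(T)`, and letting `t → ∞`
shows that `U` also integrates to zero over the whole space, so Dynkin's π-λ theorem spreads the
vanishing from the sets `{T ≤ t}` to all of `σ(T)`.
-/

open MeasureTheory Filter Set Topology

section ConditionalExpectation

variable {α E : Type*} {m m₀ : MeasurableSpace α} {μ : Measure α}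
  [NormedAddCommGroup E] [NormedSpace ℝ E] {f : α → E}

theorem condExp_ae_eq_zero_iff_forall_setIntegral_eq_zero [CompleteSpace E] (hm : m ≤ m₀)
    [SigmaFinite (μ.trim hm)] (hf : Integrable f μ) :
    μ[f | m] =ᵐ[μ] 0 ↔ ∀ s, MeasurableSet[m] s → ∫ x in s, f x ∂μ = 0 := by
  constructor
  · intro h s hs
    rw [← setIntegral_condExp hm hf hs, integral_congr_ae (ae_restrict_of_ae h)]
    exact integral_zero α E
  · intro h
    refine (ae_eq_condExp_of_forall_setIntegral_eq hm hf (fun _ _ _ => integrableOn_zero)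
      (fun s hs _ => ?_) aestronglyMeasurable_zero).symm
    rw [h s hs, integral_zero]

theorem setIntegral_eq_zero_of_isPiSystem {S : Set (Set α)} (hm : m ≤ m₀)
    (hgen : m = MeasurableSpace.generateFrom S) (hS : IsPiSystem S) (hf : Integrable f μ)
    (h_univ : ∫ x, f x ∂μ = 0) (h_basic : ∀ s ∈ S, ∫ x in s, f x ∂μ = 0) {s : Set α}
    (hs : MeasurableSet[m] s) : ∫ x in s, f x ∂μ = 0 := by
  induction s, hs using MeasurableSpace.induction_on_inter hgen hS with
  | empty => simp
  | basic t ht => exact h_basic t ht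
  | compl t ht iht =>
    have := integral_add_compl (hm t ht) hf
    rwa [iht, h_univ, zero_add] at this
  | iUnion g hdisj hg ihg =>
    exact (hasSum_integral_iUnion (fun i => hm _ (hg i)) hdisj hf.integrableOn).unique
      (by simpa only [ihg] using hasSum_zero)

end ConditionalExpectation

theorem comap_eq_generateFrom_preimage_Iic {α : Type*} (T : α → ℝ) :
    MeasurableSpace.comap T Real.measurableSpace =
      MeasurableSpace.generateFrom (preimage T '' range Iic) := by
  rw [Real.measurableSpace, borel_eq_generateFrom_Iic, MeasurableSpace.comap_generateFrom]

section SublevelSets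

variable {α : Type*} [MeasurableSpace α] {μ : Measure α} {T : α → ℝ}

theorem integral_mul_ite_le_eq_setIntegral (hT : Measurable T) (U : α → ℝ) (t : ℝ) :
    ∫ x, U x * (if T x ≤ t then (1 : ℝ) else 0) ∂μ = ∫ x in T ⁻¹' Iic t, U x ∂μ := by
  rw [← integral_indicator (hT measurableSet_Iic)]
  congr 1 with x
  by_cases hx : T x ≤ t <;> simp [hx]

theorem tendsto_setIntegral_preimage_Iic_atTop {E : Type*} [NormedAddCommGroup E]
    [NormedSpace ℝ E] {f : α → E} (hT : Measurable T) (hf : Integrable f μ) :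
    Tendsto (fun t : ℝ => ∫ x in T ⁻¹' Iic t, f x ∂μ) atTop (𝓝 (∫ x, f x ∂μ)) := by
  have h_univ : ⋃ t : ℝ, T ⁻¹' Iic t = univ := by
    rw [← preimage_iUnion, iUnion_Iic, preimage_univ]
  have h_mono : Monotone fun t : ℝ => T ⁻¹' Iic t :=
    fun _ _ hst => preimage_mono (Iic_subset_Iic.mpr hst)
  simpa only [h_univ, Measure.restrict_univ] using
    tendsto_setIntegral_of_monotone (fun t => hT measurableSet_Iic) h_mono
      (h_univ ▸ hf.integrableOn)

end SublevelSets

/-- `E[U | T] = 0` a.s. iff `E[U · 𝟙(T ≤ t)] = 0` for all `t ∈ ℝ`. -/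
theorem stmt4 {Ω : Type*} [MeasurableSpace Ω] (μ : Measure Ω) [IsProbabilityMeasure μ]
    (U : Ω → ℝ) (T : Ω → ℝ) (hU : Integrable U μ) (hT : Measurable T) :
    (μ[U | MeasurableSpace.comap T Real.measurableSpace] =ᵐ[μ] 0) ↔
      ∀ t : ℝ, ∫ ω, U ω * (if T ω ≤ t then (1 : ℝ) else 0) ∂μ = 0 := by
  simp_rw [integral_mul_ite_le_eq_setIntegral hT,
    condExp_ae_eq_zero_iff_forall_setIntegral_eq_zero hT.comap_le hU]
  refine ⟨fun h t => h _ ⟨Iic t, measurableSet_Iic, rfl⟩, fun h s hs => ?_⟩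
  have h_univ : ∫ ω, U ω ∂μ = 0 :=
    tendsto_nhds_unique (tendsto_setIntegral_preimage_Iic_atTop hT hU)
      (by simpa only [h] using tendsto_const_nhds)
  refine setIntegral_eq_zero_of_isPiSystem hT.comap_le (comap_eq_generateFrom_preimage_Iic T)
    (isPiSystem_Iic.comap T) hU h_univ ?_ hs
  rintro _ ⟨_, ⟨t, rfl⟩, rfl⟩
  exact h t
end

section
/- For an integrable random variable U and a bounded real random variable T: E[U | T] = 0 almost surely if and only if E[U · (cos(tT) + sin(tT))] = 0 for all t ∈ ℝ. -/
/-!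
Conditioning on `T` kills `U` iff `∫ ω in T ⁻¹' A, U ω ∂μ = 0` for every Borel set `A`, i.e. iff
the finite signed measure `T_*(U μ)` vanishes. Splitting `U = U⁺ - U⁻`, this says that the finite
measures `T_*(U⁺ μ)` and `T_*(U⁻ μ)` coincide, which by uniqueness of characteristic functions
means `∫ U e^{itT} dμ = 0` for all `t`. As cosine is even and sine is odd, the real and imaginary
parts of these integrals all vanish iff `∫ U (cos (tT) + sin (tT)) dμ = 0` for all `t`.
-/

open MeasureTheory Complex

open scoped ENNReal InnerProductSpace

namespace MeasureTheory

variable {Ω E F : Type*} {mΩ : MeasurableSpace Ω} {μ : Measure Ω}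

theorem condExp_ae_eq_zero_iff [NormedAddCommGroup F] [NormedSpace ℝ F] [CompleteSpace F]
    {m : MeasurableSpace Ω} (hm : m ≤ mΩ) [SigmaFinite (μ.trim hm)] {U : Ω → F}
    (hU : Integrable U μ) :
    μ[U | m] =ᵐ[μ] 0 ↔ ∀ s, MeasurableSet[m] s → ∫ ω in s, U ω ∂μ = 0 := by
  refine ⟨fun h s hs => ?_, fun h => ?_⟩
  · rw [← setIntegral_condExp hm hU hs, integral_congr_ae (ae_restrict_of_ae h)]
    simp
  · refine (ae_eq_condExp_of_forall_setIntegral_eq hm hU (fun _ _ _ => integrableOn_zero)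
      (fun s hs _ => ?_) aestronglyMeasurable_zero).symm
    simp [h s hs]

theorem forall_measurableSet_comap_iff [MeasurableSpace E] {T : Ω → E} {P : Set Ω → Prop} :
    (∀ s, MeasurableSet[MeasurableSpace.comap T ‹_›] s → P s) ↔
      ∀ A, MeasurableSet A → P (T ⁻¹' A) := by
  refine ⟨fun h A hA => h _ ⟨A, hA, rfl⟩, ?_⟩
  rintro h _ ⟨A, hA, rfl⟩
  exact h A hA

/-- The image under `T` of `f⁺ μ`, so that `T_*(f μ)` is the signed measure
`pushforwardDensity μ f T - pushforwardDensity μ (-f) T`. -/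
noncomputable def pushforwardDensity [MeasurableSpace E] (μ : Measure Ω) (f : Ω → ℝ)
    (T : Ω → E) : Measure E :=
  (μ.withDensity fun ω => ENNReal.ofReal (f ω)).map T

variable [MeasurableSpace E] {U : Ω → ℝ} {T : Ω → E}

theorem isFiniteMeasure_pushforwardDensity (hU : Integrable U μ) :
    IsFiniteMeasure (pushforwardDensity μ U T) :=
  have := isFiniteMeasure_withDensity_ofReal hU.2
  Measure.isFiniteMeasure_map _ _

theorem integral_pushforwardDensity [NormedAddCommGroup F] [NormedSpace ℝ F]
    (hU : AEMeasurable U μ) (hT : Measurable T) {g : E → F} (hg : StronglyMeasurable g) :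
    ∫ x, g x ∂pushforwardDensity μ U T = ∫ ω, max (U ω) 0 • g (T ω) ∂μ := by
  rw [pushforwardDensity, integral_map hT.aemeasurable hg.aestronglyMeasurable,
    integral_withDensity_eq_integral_toReal_smul₀ hU.ennreal_ofReal
      (Filter.Eventually.of_forall fun _ => ENNReal.ofReal_lt_top)]
  simp only [ENNReal.toReal_ofReal']

theorem integral_pushforwardDensity_sub [NormedAddCommGroup F] [NormedSpace ℝ F]
    (hU : Integrable U μ) (hT : Measurable T) {g : E → F} (hg : StronglyMeasurable g) {C : ℝ}
    (hgC : ∀ x, ‖g x‖ ≤ C) :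
    ∫ x, g x ∂pushforwardDensity μ U T - ∫ x, g x ∂pushforwardDensity μ (-U) T =
      ∫ ω, U ω • g (T ω) ∂μ := by
  have hgT : MemLp (g ∘ T) ∞ μ :=
    memLp_top_of_bound (hg.comp_measurable hT).aestronglyMeasurable C
      (Filter.Eventually.of_forall fun ω => hgC (T ω))
  rw [integral_pushforwardDensity hU.aemeasurable hT hg,
    integral_pushforwardDensity hU.neg.aemeasurable hT hg,
    ← integral_sub (hU.pos_part.smul_of_top_left hgT : Integrable (fun ω => _ • g (T ω)) μ)
      (hU.neg.pos_part.smul_of_top_left hgT : Integrable (fun ω => _ • g (T ω)) μ)]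
  simp only [Pi.neg_apply, ← sub_smul, max_zero_sub_max_neg_zero_eq_self]

theorem measureReal_pushforwardDensity_sub (hU : Integrable U μ) (hT : Measurable T) {A : Set E}
    (hA : MeasurableSet A) :
    (pushforwardDensity μ U T).real A - (pushforwardDensity μ (-U) T).real A =
      ∫ ω in T ⁻¹' A, U ω ∂μ := by
  have h := integral_pushforwardDensity_sub hU hT (stronglyMeasurable_one.indicator hA)
    (C := 1) fun x => norm_indicator_le_norm_self (1 : E → ℝ) x |>.trans_eq norm_one
  rw [integral_indicator_one hA, integral_indicator_one hA] at h
  rw [h, ← integral_indicator (hT hA)]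
  congr with ω
  by_cases hω : T ω ∈ A <;> simp [hω]

theorem pushforwardDensity_eq_iff (hU : Integrable U μ) (hT : Measurable T) :
    pushforwardDensity μ U T = pushforwardDensity μ (-U) T ↔
      ∀ A, MeasurableSet A → ∫ ω in T ⁻¹' A, U ω ∂μ = 0 := by
  have := isFiniteMeasure_pushforwardDensity (T := T) hU
  have := isFiniteMeasure_pushforwardDensity (T := T) hU.neg
  refine ⟨fun h A hA => ?_, fun h => Measure.ext fun A hA => ?_⟩
  · rw [← measureReal_pushforwardDensity_sub hU hT hA, h, sub_self]
  · rw [← measureReal_eq_measureReal_iff (measure_ne_top _ _) (measure_ne_top _ _),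
      ← sub_eq_zero, measureReal_pushforwardDensity_sub hU hT hA, h A hA]

section Fourier

variable [NormedAddCommGroup E] [InnerProductSpace ℝ E] [BorelSpace E]

theorem charFun_pushforwardDensity_sub (hU : Integrable U μ) (hT : Measurable T) (t : E) :
    charFun (pushforwardDensity μ U T) t - charFun (pushforwardDensity μ (-U) T) t =
      ∫ ω, U ω • exp (⟪T ω, t⟫_ℝ * I) ∂μ :=
  integral_pushforwardDensity_sub hU hT (by fun_prop : Continuous fun x : E =>
    exp (⟪x, t⟫_ℝ * I)).stronglyMeasurable fun x => (norm_exp_ofReal_mul_I _).le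

theorem pushforwardDensity_eq_iff_integral_smul_exp [CompleteSpace E] [SecondCountableTopology E]
    (hU : Integrable U μ) (hT : Measurable T) :
    pushforwardDensity μ U T = pushforwardDensity μ (-U) T ↔
      ∀ t : E, ∫ ω, U ω • exp (⟪T ω, t⟫_ℝ * I) ∂μ = 0 := by
  have := isFiniteMeasure_pushforwardDensity (T := T) hU
  have := isFiniteMeasure_pushforwardDensity (T := T) hU.neg
  simp_rw [← charFun_pushforwardDensity_sub hU hT, sub_eq_zero]
  exact ⟨fun h t => h ▸ rfl, fun h => Measure.ext_of_charFun (funext h)⟩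

end Fourier

theorem integral_smul_exp_mul_I_eq_zero_iff {θ : Ω → ℝ} (hU : Integrable U μ)
    (hθ : AEStronglyMeasurable θ μ) :
    ∫ ω, U ω • exp (θ ω * I) ∂μ = 0 ↔
      ∫ ω, U ω * Real.cos (θ ω) ∂μ = 0 ∧ ∫ ω, U ω * Real.sin (θ ω) ∂μ = 0 := by
  have hintegrable : Integrable (fun ω => U ω • exp (θ ω * I)) μ :=
    hU.smul_bdd 1 ((by fun_prop : Continuous fun x : ℝ => exp (x * I)).comp_aestronglyMeasurable
      hθ) (Filter.Eventually.of_forall fun ω => (norm_exp_ofReal_mul_I _).le)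
  have hre := integral_re hintegrable
  have him := integral_im hintegrable
  simp only [RCLike.re_to_complex, RCLike.im_to_complex] at hre him
  rw [Complex.ext_iff, ← hre, ← him]
  simp [exp_ofReal_mul_I_re, exp_ofReal_mul_I_im]

theorem forall_integral_mul_cos_add_sin_eq_zero_iff {T : Ω → ℝ} (hU : Integrable U μ)
    (hT : AEStronglyMeasurable T μ) :
    (∀ t : ℝ, ∫ ω, U ω * (Real.cos (t * T ω) + Real.sin (t * T ω)) ∂μ = 0) ↔
      ∀ t : ℝ, ∫ ω, U ω * Real.cos (t * T ω) ∂μ = 0 ∧ ∫ ω, U ω * Real.sin (t * T ω) ∂μ = 0 := by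
  have hintegrable : ∀ (f : ℝ → ℝ), Continuous f → (∀ x, |f x| ≤ 1) → ∀ t : ℝ,
      Integrable (fun ω => U ω * f (t * T ω)) μ := fun f hf hf1 t =>
    hU.mul_bdd (c := 1) ((hf.comp (continuous_const_mul t)).comp_aestronglyMeasurable hT)
      (Filter.Eventually.of_forall fun ω => hf1 _)
  have hsplit : ∀ t : ℝ, ∫ ω, U ω * (Real.cos (t * T ω) + Real.sin (t * T ω)) ∂μ =
      ∫ ω, U ω * Real.cos (t * T ω) ∂μ + ∫ ω, U ω * Real.sin (t * T ω) ∂μ := fun t => by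
    simp_rw [mul_add]
    exact integral_add (hintegrable _ Real.continuous_cos Real.abs_cos_le_one t)
      (hintegrable _ Real.continuous_sin Real.abs_sin_le_one t)
  refine ⟨fun h t => ?_, fun h t => by rw [hsplit, (h t).1, (h t).2, add_zero]⟩
  have hpos := hsplit t ▸ h t
  have hneg := hsplit (-t) ▸ h (-t)
  simp only [neg_mul, Real.cos_neg, Real.sin_neg, mul_neg, integral_neg] at hneg
  constructor <;> linarith

end MeasureTheory

theorem stmt5_general {Ω : Type*} [MeasurableSpace Ω] (μ : Measure Ω) [IsProbabilityMeasure μ]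
    (U : Ω → ℝ) (T : Ω → ℝ) (hU : Integrable U μ) (hT : Measurable T) :
    (μ[U | MeasurableSpace.comap T Real.measurableSpace] =ᵐ[μ] 0) ↔
      ∀ t : ℝ, ∫ ω, U ω * (Real.cos (t * T ω) + Real.sin (t * T ω)) ∂μ = 0 := by
  rw [condExp_ae_eq_zero_iff hT.comap_le hU, forall_measurableSet_comap_iff,
    ← pushforwardDensity_eq_iff hU hT, pushforwardDensity_eq_iff_integral_smul_exp hU hT,
    forall_integral_mul_cos_add_sin_eq_zero_iff hU hT.aestronglyMeasurable]
  refine forall_congr' fun t => ?_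
  simp only [RCLike.inner_apply, conj_trivial]
  exact_mod_cast integral_smul_exp_mul_I_eq_zero_iff hU (hT.const_mul t).aestronglyMeasurable

/-- For integrable `U` and bounded real `T`:
`E[U | T] = 0` a.s. iff `E[U · (cos(tT) + sin(tT))] = 0` for all `t ∈ ℝ`. -/
theorem stmt5 {Ω : Type*} [MeasurableSpace Ω] (μ : Measure Ω) [IsProbabilityMeasure μ]
    (U : Ω → ℝ) (T : Ω → ℝ) (hU : Integrable U μ) (hT : Measurable T)
    (hTbdd : ∃ C : ℝ, ∀ ω, |T ω| ≤ C) :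
    (μ[U | MeasurableSpace.comap T Real.measurableSpace] =ᵐ[μ] 0) ↔
      ∀ t : ℝ, ∫ ω, U ω * (Real.cos (t * T ω) + Real.sin (t * T ω)) ∂μ = 0 :=
  stmt5_general μ U T hU hT
end
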